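/- arXiv:1210.1805 — 3 statements merged into one kernel-verified Lean document; each statement's English description precedes it below -/
import Mathlib

section
/- For any positive integer j and any graph G, the j-independence number α_j(G) is at most the upper j-annihilation number a_j(G). -/
open Finset

namespace DSI

variable {V : Type*} (G : SimpleGraph V) [Fintype V] [DecidableEq V] [DecidableRel G.Adj]

/-- The degree sequence of `G`, sorted in non-decreasing order. -/
def dseq : List ℕ := (Finset.univ.val.map (fun v => G.degree v)).sort (· ≤ ·)

/-- The sum of the `k` smallest degrees, `Σ_{i=1}^k d_i`. -/
def sumSmallest (k : ℕ) : ℕ := ((dseq G).take k).sum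

/-- The sum of the `k` largest degrees, `Σ_{i=1}^k d_{n-i+1}`. -/
def sumLargest (k : ℕ) : ℕ := ((dseq G).reverse.take k).sum

/-- The number of edges `m(G)`. -/
def esize : ℕ := G.edgeFinset.card

/-- `m[S]`: the number of edges of the subgraph induced by `S`. -/
def mOn (S : Finset V) : ℕ := (S.sym2.filter (fun e => e ∈ G.edgeSet)).card

/-- A set `I` is `j`-independent if every vertex of `I` has fewer than `j` neighbours in `I`,
i.e. the induced subgraph has maximum degree `< j`. -/
def JIndep (j : ℕ) (I : Finset V) : Prop := ∀ v ∈ I, (I.filter (G.Adj v)).card < j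

/-- The `j`-independence number `α_j(G)`. -/
noncomputable def alphaJ (j : ℕ) : ℕ := sSup {k | ∃ I : Finset V, JIndep G j I ∧ I.card = k}

/-- The family `F` of maximum `j`-independent sets. -/
noncomputable def maxJIndep (j : ℕ) : Set (Finset V) :=
  {S | JIndep G j S ∧ S.card = alphaJ G j}

/-- `max_{S ∈ F} (m[V−S] − m[S])`. -/
noncomputable def fU (j : ℕ) : ℤ :=
  sSup ((fun S : Finset V => (mOn G Sᶜ : ℤ) - (mOn G S : ℤ)) '' maxJIndep G j)

/-- `min_{S ∈ F} (m[V−S] − m[S])`. -/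
noncomputable def fL (j : ℕ) : ℤ :=
  sInf ((fun S : Finset V => (mOn G Sᶜ : ℤ) - (mOn G S : ℤ)) '' maxJIndep G j)

/-- The upper `j`-annihilation number `a_j(G)`. -/
noncomputable def aJ (j : ℕ) : ℕ :=
  sSup {k | k ≤ Fintype.card V ∧ (sumSmallest G k : ℤ) + fU G j ≤ (esize G : ℤ)}

/-- The lower `j`-annihilation number `c_j(G)`. -/
noncomputable def cJ (j : ℕ) : ℕ :=
  sInf {k | k ≤ Fintype.card V ∧ (esize G : ℤ) ≤ (sumLargest G k : ℤ) + fL G j}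

/-- The annihilation number `a(G)`. -/
noncomputable def annihilation : ℕ :=
  sSup {k | k ≤ Fintype.card V ∧ sumSmallest G k ≤ esize G}

/-- An independent set. -/
def IndepSet (I : Finset V) : Prop := ∀ v ∈ I, ∀ w ∈ I, ¬ G.Adj v w

/-- The independence number `α(G)`. -/
noncomputable def alpha : ℕ := sSup {k | ∃ I : Finset V, IndepSet G I ∧ I.card = k}

end DSI

/-!
Double counting the edges of `G` against a vertex set `S` gives
`Σ_{v ∈ S} deg v + m[V − S] − m[S] = m(G)`. Since the sum of the `|S|` smallest degrees is at
most `Σ_{v ∈ S} deg v`, every maximum `j`-independent set `S` satisfies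
`Σ_{i ≤ α_j} d_i + (m[V − S] − m[S]) ≤ m(G)`, so `k = α_j(G)` is admissible in the definition
of `a_j(G)`.
-/

theorem List.Pairwise.sum_take_card_le_sum {α : Type*} [AddCommMonoid α] [LinearOrder α]
    [IsOrderedAddMonoid α] {l : List α} (hl : l.Pairwise (· ≤ ·)) {t : Multiset α}
    (ht : t ≤ ↑l) : (l.take (Multiset.card t)).sum ≤ t.sum := by
  induction l generalizing t with
  | nil => simp [Multiset.le_zero.mp ht]
  | cons a l ih =>
    rcases Multiset.empty_or_exists_mem t with rfl | ⟨c, hc⟩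
    · simp
    obtain ⟨b, hb, hab, hbl⟩ : ∃ b ∈ t, a ≤ b ∧ t.erase b ≤ ↑l := by
      by_cases ha : a ∈ t
      · exact ⟨a, ha, le_rfl, Multiset.erase_le_iff_le_cons.mpr ht⟩
      · have htl : t ≤ ↑l := (Multiset.le_cons_of_notMem ha).mp ht
        exact ⟨c, hc, List.rel_of_pairwise_cons hl (Multiset.mem_of_le htl hc),
          (Multiset.erase_le c t).trans htl⟩
    calc ((a :: l).take (Multiset.card t)).sum
        = a + (l.take (Multiset.card (t.erase b))).sum := by
          rw [← Multiset.card_erase_add_one hb]; simp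
      _ ≤ b + (t.erase b).sum := add_le_add hab (ih hl.of_cons hbl)
      _ = t.sum := by rw [← Multiset.sum_cons, Multiset.cons_erase hb]

namespace DSI

variable {V : Type*} (G : SimpleGraph V) [Fintype V] [DecidableRel G.Adj]

theorem maxJIndep_nonempty (j : ℕ) : (maxJIndep G j).Nonempty :=
  Nat.sSup_mem (s := {k | ∃ I : Finset V, JIndep G j I ∧ #I = k})
    ⟨0, ∅, fun v hv => absurd hv (Finset.notMem_empty v), Finset.card_empty⟩
    ⟨Fintype.card V, by rintro k ⟨I, -, rfl⟩; exact Finset.card_le_univ I⟩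

theorem sumSmallest_card_le_sum_degree (S : Finset V) :
    sumSmallest G #S ≤ ∑ v ∈ S, G.degree v := by
  have hsub : S.val.map (fun v => G.degree v) ≤ (dseq G : Multiset ℕ) := by
    rw [dseq, Multiset.sort_eq]
    exact Multiset.map_le_map (Finset.val_le_iff.mpr (Finset.subset_univ S))
  have h := List.Pairwise.sum_take_card_le_sum (l := dseq G) (Multiset.pairwise_sort _ _) hsub
  rwa [Multiset.card_map, Finset.card_val] at h

variable [DecidableEq V]

theorem mOn_eq_card_filter_edgeFinset (S : Finset V) :
    mOn G S = #(G.edgeFinset.filter (· ∈ S.sym2)) := by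
  unfold mOn
  congr 1
  ext e
  simp only [Finset.mem_filter, SimpleGraph.mem_edgeFinset, and_comm]

theorem sum_degree_eq_sum_card_filter_mem (S : Finset V) :
    ∑ v ∈ S, G.degree v = ∑ e ∈ G.edgeFinset, #(S.filter (· ∈ e)) := by
  simp_rw [← SimpleGraph.card_incidenceFinset_eq_degree, SimpleGraph.incidenceFinset_eq_filter,
    Finset.card_filter]
  exact Finset.sum_comm

theorem card_filter_mem_add_ite_mem_sym2_compl (S : Finset V) {e : Sym2 V} (he : ¬ e.IsDiag) :
    #(S.filter (· ∈ e)) + (if e ∈ Sᶜ.sym2 then 1 else 0) = 1 + (if e ∈ S.sym2 then 1 else 0) := by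
  induction e using Sym2.ind with
  | _ a b =>
    have hab : a ≠ b := by simpa using he
    have hfilter : S.filter (· ∈ s(a, b)) = S.filter (· = a) ∪ S.filter (· = b) := by
      ext v; simp [Sym2.mem_iff, and_or_left]
    rw [hfilter, Finset.card_union_of_disjoint (Finset.disjoint_filter.mpr (by grind)),
      Finset.filter_eq', Finset.filter_eq']
    by_cases ha : a ∈ S <;> by_cases hb : b ∈ S <;> simp [ha, hb]

theorem sum_degree_add_mOn_compl (S : Finset V) :
    ∑ v ∈ S, G.degree v + mOn G Sᶜ = esize G + mOn G S := by
  rw [mOn_eq_card_filter_edgeFinset, mOn_eq_card_filter_edgeFinset,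
    sum_degree_eq_sum_card_filter_mem, esize, Finset.card_filter, Finset.card_filter,
    Finset.card_eq_sum_ones G.edgeFinset, ← Finset.sum_add_distrib, ← Finset.sum_add_distrib]
  refine Finset.sum_congr rfl fun e he => card_filter_mem_add_ite_mem_sym2_compl S ?_
  exact G.not_isDiag_of_mem_edgeSet (SimpleGraph.mem_edgeFinset.mp he)

theorem sumSmallest_card_add_mOn_compl_sub_mOn_le (S : Finset V) :
    (sumSmallest G #S : ℤ) + ((mOn G Sᶜ : ℤ) - mOn G S) ≤ esize G := by
  have hsmall : (sumSmallest G #S : ℤ) ≤ ∑ v ∈ S, (G.degree v : ℤ) := by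
    exact_mod_cast sumSmallest_card_le_sum_degree G S
  have hcount : ∑ v ∈ S, (G.degree v : ℤ) + mOn G Sᶜ = esize G + mOn G S := by
    exact_mod_cast sum_degree_add_mOn_compl G S
  linarith

theorem sumSmallest_alphaJ_add_fU_le_esize (j : ℕ) :
    (sumSmallest G (alphaJ G j) : ℤ) + fU G j ≤ esize G := by
  have hfU : fU G j ≤ esize G - (sumSmallest G (alphaJ G j) : ℤ) := by
    refine csSup_le ((maxJIndep_nonempty G j).image _) ?_
    rintro _ ⟨S, ⟨-, hcard⟩, rfl⟩
    have hS := sumSmallest_card_add_mOn_compl_sub_mOn_le G S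
    rw [hcard] at hS
    linarith
  linarith

end DSI

theorem alphaJ_le_aJ_general {V : Type*} (G : SimpleGraph V) [Fintype V]
    [DecidableEq V] [DecidableRel G.Adj] (j : ℕ) :
    DSI.alphaJ G j ≤ DSI.aJ G j := by
  obtain ⟨I, -, hcard⟩ := DSI.maxJIndep_nonempty G j
  have hle_card : DSI.alphaJ G j ≤ Fintype.card V := hcard ▸ Finset.card_le_univ I
  exact le_csSup ⟨Fintype.card V, fun _ hk => hk.1⟩
    ⟨hle_card, DSI.sumSmallest_alphaJ_add_fU_le_esize G j⟩

theorem alphaJ_le_aJ {V : Type*} (G : SimpleGraph V) [Fintype V]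
    [DecidableEq V] [DecidableRel G.Adj] (j : ℕ) (hj : 1 ≤ j) :
    DSI.alphaJ G j ≤ DSI.aJ G j :=
  alphaJ_le_aJ_general G j
end

section
/- For a join of an empty graph on p vertices with a complete graph on n−p vertices, where 2p+3 < n, the independence number equals p and is strictly less than (n−3)/2, which is strictly less than the annihilation number a(G); in particular α(G) < a(G). -/
open Finset

/-- The join `E_p + K_{n-p}` on vertex set `Fin n`: the first `p` vertices form an
empty graph, the remaining `n - p` a complete graph, and all edges in between. -/
def joinEK (p n : ℕ) : SimpleGraph (Fin n) :=
  SimpleGraph.fromRel (fun v w => p ≤ v.val ∨ p ≤ w.val)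

instance (p n : ℕ) : DecidableRel (joinEK p n).Adj := fun v w =>
  decidable_of_iff _ (SimpleGraph.fromRel_adj _ v w).symm

/-! The `p` vertices of `E_p` form an independent set, and an independent set meeting `K_{n-p}`
is a single vertex, since those vertices are universal; hence `α = p`. The sorted degree sequence
is `p` copies of `n - p` followed by `n - p` copies of `n - 1`. For `k = ⌊(n-1)/2⌋ ≥ p`, the `k`
smallest degrees sum to `p(n-p) + (k-p)(n-1)`, which is at most half the degree sum
`p(n-p) + (n-p)(n-1) = 2m`; so `a(G) ≥ ⌊(n-1)/2⌋ > (n-3)/2`. -/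

namespace DSI

variable {V : Type*}

theorem IndepSet.card_le_one_of_isUniversal {G : SimpleGraph V} {I : Finset V}
    (hI : IndepSet G I) {v : V} (hv : v ∈ I) (hu : G.IsUniversal v) : #I ≤ 1 :=
  card_le_one.mpr fun a ha b hb => by
    by_contra hab
    by_cases hav : a = v
    · exact hI v hv b hb (hu (hav ▸ hab))
    · exact hI v hv a ha (hu (Ne.symm hav))

variable (G : SimpleGraph V) [Fintype V] [DecidableRel G.Adj]

theorem sumSmallest_card : sumSmallest G (Fintype.card V) = 2 * esize G := by
  have hlen : (dseq G).length = Fintype.card V := by simp [dseq, Multiset.length_sort]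
  rw [sumSmallest, ← hlen, List.take_length, esize, ← G.sum_degrees_eq_twice_card_edges,
    Finset.sum, ← Multiset.sum_coe, dseq, Multiset.sort_eq]

theorem le_annihilation {k : ℕ} (hk : k ≤ Fintype.card V) (h : sumSmallest G k ≤ esize G) :
    k ≤ annihilation G :=
  le_csSup ⟨Fintype.card V, fun _ hx => hx.1⟩ ⟨hk, h⟩

end DSI

open SimpleGraph

theorem Fin.card_filter_le_val (n p : ℕ) : #({w | p ≤ w.val} : Finset (Fin n)) = n - p := by
  have := card_filter_add_card_filter_not (s := (univ : Finset (Fin n))) (p := fun w => w.val < p)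
  simp only [not_lt, Fin.card_filter_val_lt, card_univ, Fintype.card_fin] at this
  omega

variable {p n : ℕ}

theorem joinEK_adj {v w : Fin n} :
    (joinEK p n).Adj v w ↔ v ≠ w ∧ (p ≤ v.val ∨ p ≤ w.val) := by
  rw [joinEK, fromRel_adj]
  tauto

theorem isUniversal_joinEK {v : Fin n} (hv : p ≤ v.val) : (joinEK p n).IsUniversal v :=
  fun _ hw => joinEK_adj.mpr ⟨hw, Or.inl hv⟩

theorem degree_joinEK_of_le {v : Fin n} (hv : p ≤ v.val) : (joinEK p n).degree v = n - 1 := by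
  simpa using (degree_eq_card_sub_one _ v).mpr (isUniversal_joinEK hv)

theorem degree_joinEK_of_lt {v : Fin n} (hv : v.val < p) : (joinEK p n).degree v = n - p := by
  have : (joinEK p n).neighborFinset v = ({w | p ≤ w.val} : Finset (Fin n)) := by
    ext w
    simp only [mem_neighborFinset, joinEK_adj, Finset.mem_filter, Finset.mem_univ, true_and]
    constructor
    · rintro ⟨-, h | h⟩ <;> omega
    · exact fun h => ⟨fun hvw => by omega, Or.inr h⟩
  rw [← card_neighborFinset_eq_degree, this, Fin.card_filter_le_val]

theorem dseq_joinEK (p m : ℕ) :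
    DSI.dseq (joinEK p (p + m)) = List.replicate p m ++ List.replicate m (p + m - 1) := by
  have hdegrees : univ.val.map (fun v => (joinEK p (p + m)).degree v)
      = ↑(List.replicate p m ++ List.replicate m (p + m - 1)) := by
    rw [Fin.univ_val_map, List.ofFn_add]
    simp [degree_joinEK_of_lt, degree_joinEK_of_le, List.ofFn_const]
  rw [DSI.dseq, hdegrees, Multiset.coe_sort, List.mergeSort_eq_self]
  simp [List.pairwise_append]
  omega

theorem sumSmallest_joinEK (p : ℕ) {m j : ℕ} (hj : j ≤ m) :
    DSI.sumSmallest (joinEK p (p + m)) (p + j) = p * m + j * (p + m - 1) := by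
  simp [DSI.sumSmallest, dseq_joinEK, List.take_append, hj]

theorem alpha_joinEK (hp : 0 < p) (hpn : p ≤ n) : DSI.alpha (joinEK p n) = p := by
  have hlow : #({v | v.val < p} : Finset (Fin n)) = p := by simp [Fin.card_filter_val_lt, hpn]
  refine IsGreatest.csSup_eq ⟨⟨_, ?_, hlow⟩, ?_⟩
  · intro v hv w hw hadj
    simp only [Finset.mem_filter, Finset.mem_univ, true_and] at hv hw
    rw [joinEK_adj] at hadj
    omega
  · rintro k ⟨I, hI, rfl⟩
    by_cases hhigh : ∃ v ∈ I, p ≤ v.val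
    · obtain ⟨v, hv, hpv⟩ := hhigh
      exact (hI.card_le_one_of_isUniversal hv (isUniversal_joinEK hpv)).trans hp
    · push Not at hhigh
      calc #I ≤ #({v | v.val < p} : Finset (Fin n)) :=
            card_le_card fun w hw => by simpa using hhigh w hw
        _ = p := hlow

theorem le_annihilation_joinEK (h : 2 * p < n) :
    (n - 1) / 2 ≤ DSI.annihilation (joinEK p n) := by
  obtain ⟨m, rfl⟩ := Nat.exists_eq_add_of_le (by omega : p ≤ n)
  obtain ⟨j, hj⟩ : ∃ j, (p + m - 1) / 2 = p + j := ⟨(p + m - 1) / 2 - p, by omega⟩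
  rw [hj]
  refine DSI.le_annihilation _ (by simp; omega) (Nat.le_of_mul_le_mul_left ?_ two_pos)
  rw [← DSI.sumSmallest_card, Fintype.card_fin, sumSmallest_joinEK p le_rfl,
    sumSmallest_joinEK p (by omega)]
  obtain ⟨d, hd⟩ : ∃ d, p + m = d + 1 := ⟨p + m - 1, by omega⟩
  rw [show p + m - 1 = d by omega]
  have hjm : 2 * j + p + 1 ≤ m := by omega
  nlinarith

theorem joinEK_alpha_lt_annihilation (p n : ℕ) (hp : 0 < p) (h : 2 * p + 3 < n) :
    DSI.alpha (joinEK p n) = p ∧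
    (p : ℚ) < ((n : ℚ) - 3) / 2 ∧
    ((n : ℚ) - 3) / 2 < (DSI.annihilation (joinEK p n) : ℚ) ∧
    DSI.alpha (joinEK p n) < DSI.annihilation (joinEK p n) := by
  have hα := alpha_joinEK hp (by omega : p ≤ n)
  have ha : n ≤ 2 * DSI.annihilation (joinEK p n) + 2 := by
    have := le_annihilation_joinEK (by omega : 2 * p < n)
    omega
  have hq : (2 * p + 3 : ℚ) < n := by exact_mod_cast h
  have haq : (n : ℚ) ≤ 2 * DSI.annihilation (joinEK p n) + 2 := by exact_mod_cast ha
  refine ⟨hα, ?_, ?_, by omega⟩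
  · rw [lt_div_iff₀ two_pos]
    linarith
  · rw [div_lt_iff₀ two_pos]
    linarith
end

section
/- For any positive integer j and any graph G, γ_j(G) ≥ min{k ∈ ℤ | Σ_{i=1}^k d_{n−i+1} + (1/2)Σ_{i=k+1}^n (d_{n−i+1} − j) ≥ m(G)}. -/
open Finset

/-- `D` is a `j`-dominating set: every vertex outside `D` has at least `j` neighbours
in `D`. -/
def DSI.JDom {V : Type*} (G : SimpleGraph V) [DecidableEq V] [DecidableRel G.Adj] (j : ℕ) (D : Finset V) : Prop :=
  ∀ v : V, v ∉ D → j ≤ (D.filter (fun w => G.Adj v w)).card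

/-- The `j`-domination number `γ_j(G)`. -/
noncomputable def DSI.gammaJ {V : Type*} (G : SimpleGraph V) [Fintype V]
    [DecidableEq V] [DecidableRel G.Adj] (j : ℕ) : ℕ :=
  sInf {k | ∃ D : Finset V, DSI.JDom G j D ∧ D.card = k}

/-- The family of minimum `j`-dominating sets. -/
noncomputable def DSI.minJDom {V : Type*} (G : SimpleGraph V) [Fintype V]
    [DecidableEq V] [DecidableRel G.Adj] (j : ℕ) : Set (Finset V) :=
  {D | DSI.JDom G j D ∧ D.card = DSI.gammaJ G j}

/-- `max_{S ∈ F} (m[V−S] − m[S])` over minimum `j`-dominating sets. -/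
noncomputable def DSI.fUdom {V : Type*} (G : SimpleGraph V) [Fintype V]
    [DecidableEq V] [DecidableRel G.Adj] (j : ℕ) : ℤ :=
  sSup ((fun S : Finset V => (DSI.mOn G Sᶜ : ℤ) - (DSI.mOn G S : ℤ)) '' DSI.minJDom G j)

/-- `min_{S ∈ F} (m[V−S] − m[S])` over minimum `j`-dominating sets. -/
noncomputable def DSI.fLdom {V : Type*} (G : SimpleGraph V) [Fintype V]
    [DecidableEq V] [DecidableRel G.Adj] (j : ℕ) : ℤ :=
  sInf ((fun S : Finset V => (DSI.mOn G Sᶜ : ℤ) - (DSI.mOn G S : ℤ)) '' DSI.minJDom G j)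

/-- `z_j(G) = max { k | Σ_{i=1}^k d_i + max_{S∈F}(m[V−S]−m[S]) ≤ m(G) }`. -/
noncomputable def DSI.zJ {V : Type*} (G : SimpleGraph V) [Fintype V]
    [DecidableEq V] [DecidableRel G.Adj] (j : ℕ) : ℕ :=
  sSup {k | k ≤ Fintype.card V ∧
    (DSI.sumSmallest G k : ℤ) + DSI.fUdom G j ≤ (DSI.esize G : ℤ)}

/-- `w_j(G) = min { k | Σ_{i=1}^k d_{n-i+1} + min_{S∈F}(m[V−S]−m[S]) ≥ m(G) }`. -/
noncomputable def DSI.wJ {V : Type*} (G : SimpleGraph V) [Fintype V]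
    [DecidableEq V] [DecidableRel G.Adj] (j : ℕ) : ℕ :=
  sInf {k | k ≤ Fintype.card V ∧
    (DSI.esize G : ℤ) ≤ (DSI.sumLargest G k : ℤ) + DSI.fLdom G j}

/-! Let `D` be a minimum `j`-dominating set and `k = |D|`. Counting the edges between `D` and its
complement, `j (n - k) ≤ ∑_{v ∈ D} deg v ≤ L`, where `L` is the sum of the `k` largest degrees.
As `L` plus the sum of the `n - k` smallest degrees is `2m`, the defining quantity at `k` equals
`m + (L - j (n - k)) / 2 ≥ m`, so the minimum is at most `k`. -/

theorem List.sum_le_sum_take_of_pairwise_ge {α : Type*} [AddCommMonoid α] [LinearOrder α]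
    [IsOrderedAddMonoid α] {l : List α} (hl : l.Pairwise (· ≥ ·)) {s : Multiset α}
    (hs : s ≤ ↑l) : s.sum ≤ (l.take (Multiset.card s)).sum := by
  induction l generalizing s with
  | nil => simp [Multiset.le_zero.mp hs]
  | cons a l ih =>
    rcases Multiset.empty_or_exists_mem s with rfl | ⟨c, hc⟩
    · simp
    -- Peel off an element `b ≤ a` of `s` whose removal leaves a submultiset of the tail.
    obtain ⟨b, hb, hba, hrest⟩ : ∃ b ∈ s, b ≤ a ∧ s.erase b ≤ ↑l := by
      by_cases ha : a ∈ s
      · exact ⟨a, ha, le_rfl, by simpa using Multiset.erase_le_erase a hs⟩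
      · have hsl : s ≤ ↑l := (Multiset.le_cons_of_notMem ha).mp (by simpa using hs)
        have hcl : c ∈ l := Multiset.mem_of_le hsl hc
        exact ⟨c, hc, (List.pairwise_cons.mp hl).1 c hcl, (Multiset.erase_le c s).trans hsl⟩
    calc s.sum = b + (s.erase b).sum := (Multiset.sum_erase hb).symm
      _ ≤ a + (l.take (Multiset.card (s.erase b))).sum :=
        add_le_add hba (ih (List.pairwise_cons.mp hl).2 hrest)
      _ = ((a :: l).take (Multiset.card s)).sum := by
        rw [← Multiset.card_erase_add_one hb, List.take_succ_cons, List.sum_cons]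

theorem List.sum_map_sub_const {M : Type*} [AddCommGroup M] (l : List M) (c : M) :
    (l.map (· - c)).sum = l.sum - l.length • c := by
  induction l with
  | nil => simp
  | cons a l ih =>
    rw [List.map_cons, List.sum_cons, ih, List.sum_cons, List.length_cons, succ_nsmul]
    abel

namespace DSI

variable {V : Type*} (G : SimpleGraph V) [Fintype V] [DecidableRel G.Adj]

theorem length_dseq : (dseq G).length = Fintype.card V := by
  simp [dseq]

theorem sum_degree_le_sumLargest (A : Finset V) : ∑ v ∈ A, G.degree v ≤ sumLargest G A.card := by
  have hsorted : (dseq G).reverse.Pairwise (· ≥ ·) :=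
    List.pairwise_reverse.mpr (Multiset.pairwise_sort _ _)
  have hsub : A.val.map (fun v => G.degree v) ≤ ((dseq G).reverse : Multiset ℕ) := by
    rw [Multiset.coe_reverse, dseq, Multiset.sort_eq]
    exact Multiset.map_le_map (Finset.val_le_iff.mpr (Finset.subset_univ A))
  have h := List.sum_le_sum_take_of_pairwise_ge hsorted hsub
  rwa [Multiset.card_map, ← Finset.card_def, ← Finset.sum_eq_multiset_sum] at h

theorem sumLargest_add_sum_take (k : ℕ) :
    sumLargest G k + ((dseq G).take (Fintype.card V - k)).sum = 2 * esize G := by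
  have htotal : (dseq G).sum = ∑ v, G.degree v := by
    rw [dseq, ← Multiset.sum_coe, Multiset.sort_eq]
    rfl
  rw [sumLargest, List.take_reverse, List.sum_reverse, length_dseq, add_comm,
    List.sum_take_add_sum_drop, htotal, G.sum_degrees_eq_twice_card_edges, esize]

variable [DecidableEq V]

theorem JDom.mul_card_compl_le_sumLargest {j : ℕ} {D : Finset V} (hD : JDom G j D) :
    j * (Fintype.card V - D.card) ≤ sumLargest G D.card := by
  have hcount : j * Dᶜ.card ≤ ∑ v ∈ Dᶜ, (D.filter (G.Adj v)).card := by
    rw [mul_comm, ← smul_eq_mul, ← Finset.sum_const]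
    exact Finset.sum_le_sum fun v hv => hD v (Finset.mem_compl.mp hv)
  have hdeg : ∀ w ∈ D, (Dᶜ.filter (G.Adj · w)).card ≤ G.degree w := fun w _ => by
    rw [← G.card_neighborFinset_eq_degree]
    exact Finset.card_le_card fun v hv => by
      simpa [G.adj_comm] using (Finset.mem_filter.mp hv).2
  calc j * (Fintype.card V - D.card) = j * Dᶜ.card := by rw [Finset.card_compl]
    _ ≤ ∑ v ∈ Dᶜ, (D.filter (G.Adj v)).card := hcount
    _ = ∑ w ∈ D, (Dᶜ.filter (G.Adj · w)).card :=
      Finset.sum_card_bipartiteAbove_eq_sum_card_bipartiteBelow G.Adj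
    _ ≤ ∑ w ∈ D, G.degree w := Finset.sum_le_sum hdeg
    _ ≤ sumLargest G D.card := sum_degree_le_sumLargest G D

theorem exists_jDom_card_eq_gammaJ (j : ℕ) : ∃ D : Finset V, JDom G j D ∧ D.card = gammaJ G j :=
  Nat.sInf_mem (s := {k | ∃ D : Finset V, JDom G j D ∧ D.card = k})
    ⟨_, Finset.univ, fun v hv => absurd (Finset.mem_univ v) hv, rfl⟩

end DSI

theorem gammaJ_ge_weak_index_general {V : Type*} (G : SimpleGraph V) [Fintype V]
    [DecidableEq V] [DecidableRel G.Adj] (j : ℕ) :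
    sInf {k | k ≤ Fintype.card V ∧
        (DSI.esize G : ℚ) ≤ (DSI.sumLargest G k : ℚ) +
          (1 / 2) * (((DSI.dseq G).take (Fintype.card V - k)).map
            (fun d => (d : ℚ) - (j : ℚ))).sum} ≤
      DSI.gammaJ G j := by
  obtain ⟨D, hD, hDcard⟩ := DSI.exists_jDom_card_eq_gammaJ G j
  rw [← hDcard]
  refine Nat.sInf_le ⟨Finset.card_le_univ D, ?_⟩
  have hlen : ((DSI.dseq G).take (Fintype.card V - D.card)).length = Fintype.card V - D.card := by
    simp [DSI.length_dseq]
  have hsum : (DSI.sumLargest G D.card : ℚ) + ((DSI.dseq G).take (Fintype.card V - D.card)).sum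
      = 2 * DSI.esize G := by exact_mod_cast DSI.sumLargest_add_sum_take G D.card
  have hdom : (j : ℚ) * (Fintype.card V - D.card : ℕ) ≤ DSI.sumLargest G D.card := by
    exact_mod_cast DSI.JDom.mul_card_compl_le_sumLargest G hD
  -- The coercion to `ℚ` in the statement elaborates as a monadic bind over the list.
  simp only [bind_pure_comp, List.map_eq_map, List.sum_map_sub_const, List.length_map,
    ← Nat.cast_list_sum, hlen, nsmul_eq_mul]
  linarith

theorem gammaJ_ge_weak_index {V : Type*} (G : SimpleGraph V) [Fintype V]
    [DecidableEq V] [DecidableRel G.Adj] (j : ℕ) (hj : 1 ≤ j) :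
    sInf {k | k ≤ Fintype.card V ∧
        (DSI.esize G : ℚ) ≤ (DSI.sumLargest G k : ℚ) +
          (1 / 2) * (((DSI.dseq G).take (Fintype.card V - k)).map
            (fun d => (d : ℚ) - (j : ℚ))).sum} ≤
      DSI.gammaJ G j :=
  gammaJ_ge_weak_index_general G j
end
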